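/- Let μ, t ∈ ℝ, σ > 0, λ > 0 with λ ≥ (μ−t)₋, and let 𝓛_λ(μ,σ) be the set of distributions F with mean μ, variance σ², and E^F[(X−t)₋] ≤ λ. Then sup over F ∈ 𝓛_λ(μ,σ) of E^F[(X−t)₊²] equals σ² + ((μ−t)₊)² if λ > (μ−t)₋, and equals 0 if λ = (μ−t)₋. -/

import Mathlib

/-!
Pointwise `(x - t)₊² ≤ (x - min μ t)²`, and the right-hand side has mean `σ² + (μ - t)₊²`. For
`t < μ` this bound is attained by the two-point law on `t` and `μ + σ² / (μ - t)`; for `μ ≤ t` it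
is approached by two-point laws whose upper atom escapes to infinity, which keeps the lower partial
moment close to `t - μ < λ`. When `λ = t - μ`, the identity `E(X - t)₊ = E(t - X)₊ - (t - μ)` forces
`(X - t)₊ = 0` almost surely.
-/

open MeasureTheory Filter Topology

noncomputable def twoPoint (a b p : ℝ) : Measure ℝ :=
  ENNReal.ofReal p • Measure.dirac a + ENNReal.ofReal (1 - p) • Measure.dirac b

section TwoPoint

variable {a b p : ℝ}

lemma isProbabilityMeasure_twoPoint (hp₀ : 0 ≤ p) (hp₁ : p ≤ 1) :
    IsProbabilityMeasure (twoPoint a b p) :=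
  ⟨by simp [twoPoint, ← ENNReal.ofReal_add hp₀ (sub_nonneg.2 hp₁)]⟩

lemma integrable_twoPoint (f : ℝ → ℝ) : Integrable f (twoPoint a b p) :=
  ((integrable_dirac enorm_lt_top).smul_measure ENNReal.ofReal_ne_top).add_measure
    ((integrable_dirac enorm_lt_top).smul_measure ENNReal.ofReal_ne_top)

lemma integral_twoPoint (f : ℝ → ℝ) (hp₀ : 0 ≤ p) (hp₁ : p ≤ 1) :
    ∫ x, f x ∂twoPoint a b p = p * f a + (1 - p) * f b := by
  rw [twoPoint, integral_add_measure
    ((integrable_dirac enorm_lt_top).smul_measure ENNReal.ofReal_ne_top)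
    ((integrable_dirac enorm_lt_top).smul_measure ENNReal.ofReal_ne_top),
    integral_smul_measure, integral_smul_measure, integral_dirac, integral_dirac,
    ENNReal.toReal_ofReal hp₀, ENNReal.toReal_ofReal (sub_nonneg.2 hp₁), smul_eq_mul, smul_eq_mul]

end TwoPoint

section Moments

variable {P : Measure ℝ} {μ σ t : ℝ}

lemma memLp_two_id (h2 : Integrable (fun x => x ^ 2) P) : MemLp (fun x => x) 2 P :=
  (memLp_two_iff_integrable_sq aestronglyMeasurable_id).2 h2

lemma integrable_of_integrable_sq [IsFiniteMeasure P] (h2 : Integrable (fun x => x ^ 2) P) :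
    Integrable (fun x => x) P :=
  (memLp_two_id h2).integrable one_le_two

lemma integral_sub_sq [IsProbabilityMeasure P] (h2 : Integrable (fun x => x ^ 2) P)
    (hm : ∫ x, x ∂P = μ) (hv : ∫ x, x ^ 2 ∂P = μ ^ 2 + σ ^ 2) (c : ℝ) :
    ∫ x, (x - c) ^ 2 ∂P = σ ^ 2 + (μ - c) ^ 2 := by
  have h1 : Integrable (fun x => 2 * x * c) P :=
    ((integrable_of_integrable_sq h2).const_mul 2).mul_const c
  simp_rw [sub_sq]
  rw [integral_add (f := fun x => x ^ 2 - 2 * x * c) (h2.sub h1) (integrable_const _),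
    integral_sub h2 h1, integral_mul_const, integral_const_mul, hm, hv]
  simp only [integral_const, probReal_univ, smul_eq_mul, one_mul]
  ring

lemma integral_posPart_sub_sq_le [IsProbabilityMeasure P] (h2 : Integrable (fun x => x ^ 2) P)
    (hm : ∫ x, x ∂P = μ) (hv : ∫ x, x ^ 2 ∂P = μ ^ 2 + σ ^ 2) :
    ∫ x, max (x - t) 0 ^ 2 ∂P ≤ σ ^ 2 + max (μ - t) 0 ^ 2 := by
  have hle : ∀ x, max (x - t) 0 ^ 2 ≤ (x - min μ t) ^ 2 := fun x => by
    rcases le_total x t with hx | hx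
    · rw [max_eq_right (by linarith)]; nlinarith
    · rw [max_eq_left (by linarith)]; nlinarith [min_le_right μ t]
  have hint : Integrable (fun x => (x - min μ t) ^ 2) P :=
    (memLp_two_iff_integrable_sq (by fun_prop)).1 ((memLp_two_id h2).sub (memLp_const _))
  calc ∫ x, max (x - t) 0 ^ 2 ∂P ≤ ∫ x, (x - min μ t) ^ 2 ∂P :=
        integral_mono_of_nonneg (ae_of_all _ fun x => by positivity) hint (ae_of_all _ hle)
    _ = σ ^ 2 + max (μ - t) 0 ^ 2 := by
        rw [integral_sub_sq h2 hm hv]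
        rcases le_total μ t with h | h <;> simp [h]

lemma integral_posPart_sub_eq [IsProbabilityMeasure P] (h1 : Integrable (fun x => x) P)
    (hm : ∫ x, x ∂P = μ) :
    ∫ x, max (x - t) 0 ∂P = ∫ x, max (t - x) 0 ∂P + (μ - t) := by
  have hl : Integrable (fun x => x - t) P := h1.sub (integrable_const t)
  have hr : Integrable (fun x => max (t - x) 0) P := ((integrable_const t).sub h1).pos_part
  have key : (fun x => max (x - t) 0) = fun x => max (t - x) 0 + (x - t) := by
    funext x; rcases le_total x t with hx | hx <;> simp [hx]
  rw [key, integral_add hr hl, integral_sub h1 (integrable_const t), hm]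
  simp

lemma integral_posPart_sub_sq_eq_zero [IsProbabilityMeasure P] (h1 : Integrable (fun x => x) P)
    (hm : ∫ x, x ∂P = μ) (h : ∫ x, max (t - x) 0 ∂P ≤ t - μ) :
    ∫ x, max (x - t) 0 ^ 2 ∂P = 0 := by
  have hpos : Integrable (fun x => max (x - t) 0) P := (h1.sub (integrable_const t)).pos_part
  have hzero : (fun x => max (x - t) 0) =ᵐ[P] 0 :=
    (integral_eq_zero_iff_of_nonneg (f := fun x => max (x - t) 0) (fun x => le_max_right _ _)
      hpos).1 <| le_antisymm (by linarith [integral_posPart_sub_eq (t := t) h1 hm])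
        (integral_nonneg fun x => le_max_right _ _)
  rw [integral_congr_ae (g := fun _ => (0 : ℝ)) (hzero.mono fun x hx => by simp_all)]
  simp

end Moments

/-- The values of `E[(X - t)₊²]` over the paper's class `𝓛_λ(μ, σ)`. -/
def excessSqValues (μ σ t lam : ℝ) : Set ℝ :=
  {y : ℝ | ∃ P : Measure ℝ, IsProbabilityMeasure P ∧ Integrable (fun x => x ^ 2) P ∧
    (∫ x, x ∂P) = μ ∧ (∫ x, x ^ 2 ∂P) = μ ^ 2 + σ ^ 2 ∧
    (∫ x, max (t - x) 0 ∂P) ≤ lam ∧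
    y = ∫ x, (max (x - t) 0) ^ 2 ∂P}

namespace excessSqValues

variable {μ σ t lam : ℝ}

lemma le_of_mem {y : ℝ} (hy : y ∈ excessSqValues μ σ t lam) :
    y ≤ σ ^ 2 + max (μ - t) 0 ^ 2 := by
  obtain ⟨P, _, h2, hm, hv, -, rfl⟩ := hy
  exact integral_posPart_sub_sq_le h2 hm hv

lemma bddAbove : BddAbove (excessSqValues μ σ t lam) := ⟨_, fun _ => le_of_mem⟩

/-- The two-point law on `a < b` with mean `μ` puts mass `(b - μ) / (b - a)` on `a`; its variance
is `(μ - a) * (b - μ)`. -/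
lemma twoPoint_mem {a b : ℝ} (hab : a < b) (haμ : a ≤ μ) (hμb : μ ≤ b) (hat : a ≤ t) (htb : t ≤ b)
    (hσ : (μ - a) * (b - μ) = σ ^ 2) (hlam : (b - μ) * (t - a) / (b - a) ≤ lam) :
    (μ - a) * (b - t) ^ 2 / (b - a) ∈ excessSqValues μ σ t lam := by
  have hba : 0 < b - a := sub_pos.2 hab
  set p := (b - μ) / (b - a) with hp
  have hp₀ : 0 ≤ p := div_nonneg (sub_nonneg.2 hμb) hba.le
  have hp₁ : p ≤ 1 := (div_le_one hba).2 (by linarith)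
  have hq : 1 - p = (μ - a) / (b - a) := by rw [hp]; field_simp; ring
  refine ⟨twoPoint a b p, isProbabilityMeasure_twoPoint hp₀ hp₁, integrable_twoPoint _,
    ?_, ?_, ?_, ?_⟩ <;> rw [integral_twoPoint _ hp₀ hp₁, hq]
  · rw [hp]; field_simp; ring
  · rw [← sub_eq_iff_eq_add', ← hσ, hp]; field_simp; ring
  · rw [max_eq_left (sub_nonneg.2 hat), max_eq_right (sub_nonpos.2 htb)]
    convert hlam using 1; ring
  · rw [max_eq_right (sub_nonpos.2 hat), max_eq_left (sub_nonneg.2 htb)]; ring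

lemma isGreatest_of_lt (ht : t < μ) (hlam : 0 ≤ lam) :
    IsGreatest (excessSqValues μ σ t lam) (σ ^ 2 + (μ - t) ^ 2) := by
  have hμt : 0 < μ - t := sub_pos.2 ht
  have hb : μ ≤ μ + σ ^ 2 / (μ - t) := le_add_of_nonneg_right (by positivity)
  refine ⟨?_, fun y hy => by simpa [max_eq_left hμt.le] using le_of_mem hy⟩
  convert twoPoint_mem (μ := μ) (σ := σ) (t := t) (lam := lam) (a := t) (b := μ + σ ^ 2 / (μ - t))
    (by linarith) ht.le hb le_rfl (by linarith)
    (by field_simp; ring) (by simpa using hlam) using 1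
  field_simp
  ring

lemma isGreatest_zero (hlam : 0 < lam) (h : t - μ = lam) :
    IsGreatest (excessSqValues μ σ t lam) 0 := by
  subst h
  have ha : μ - σ ^ 2 / (t - μ) ≤ μ := sub_le_self _ (by positivity)
  refine ⟨?_, ?_⟩
  · convert twoPoint_mem (μ := μ) (σ := σ) (t := t) (lam := t - μ) (a := μ - σ ^ 2 / (t - μ))
      (b := t) (by linarith) ha (by linarith) (by linarith) le_rfl (by field_simp; ring)
      (mul_div_cancel_right₀ _ (by linarith)).le using 1
    simp
  · rintro y ⟨P, _, h2, hm, -, hlam, rfl⟩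
    exact (integral_posPart_sub_sq_eq_zero (integrable_of_integrable_sq h2) hm hlam).le

/-- The two-point law on `μ - σ ^ 2 * u` and `μ + 1 / u`: as `u → 0⁺` it pushes all of its variance
above `t` while its lower partial moment tends to `t - μ`. -/
lemma mem_of_pos {u : ℝ} (hu : 0 < u) (hμt : μ ≤ t) (htu : u * (t - μ) ≤ 1)
    (hlam : (t - μ + σ ^ 2 * u) / (1 + σ ^ 2 * u ^ 2) ≤ lam) :
    σ ^ 2 * (1 - u * (t - μ)) ^ 2 / (1 + σ ^ 2 * u ^ 2) ∈ excessSqValues μ σ t lam := by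
  have ha : μ - σ ^ 2 * u ≤ μ := sub_le_self _ (by positivity)
  have hμb : μ < μ + 1 / u := lt_add_of_pos_right _ (by positivity)
  have hb : t ≤ μ + 1 / u := by rw [← sub_le_iff_le_add', le_div_iff₀ hu]; linarith
  have hd : (μ + 1 / u) - (μ - σ ^ 2 * u) = (1 + σ ^ 2 * u ^ 2) / u := by field_simp; ring
  convert twoPoint_mem (μ := μ) (σ := σ) (t := t) (lam := lam) (a := μ - σ ^ 2 * u)
    (b := μ + 1 / u) (ha.trans_lt hμb) ha hμb.le (by linarith) hb (by field_simp; ring)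
    (by rw [hd]; convert hlam using 1; field_simp; ring) using 1
  rw [hd]
  field_simp
  ring

lemma sSup_eq_of_le (hμt : μ ≤ t) (hlam : t - μ < lam) :
    sSup (excessSqValues μ σ t lam) = σ ^ 2 := by
  have hcont : ContinuousAt (fun u : ℝ => (t - μ + σ ^ 2 * u) / (1 + σ ^ 2 * u ^ 2)) 0 :=
    (by fun_prop : ContinuousAt _ _).div (by fun_prop) (by positivity)
  have hev : ∀ᶠ u in 𝓝[>] 0,
      σ ^ 2 * (1 - u * (t - μ)) ^ 2 / (1 + σ ^ 2 * u ^ 2) ∈ excessSqValues μ σ t lam := by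
    have hsmall : ∀ᶠ u in 𝓝 (0 : ℝ), u * (t - μ) < 1 :=
      (continuous_id.mul continuous_const).continuousAt.eventually_lt continuousAt_const
        (by simp)
    have hlam' := hcont.eventually_lt continuousAt_const (by simpa using hlam)
    filter_upwards [self_mem_nhdsWithin, nhdsWithin_le_nhds hsmall, nhdsWithin_le_nhds hlam']
      with u hu hsu hlu
    exact mem_of_pos hu hμt hsu.le hlu.le
  have hlim : Tendsto (fun u : ℝ => σ ^ 2 * (1 - u * (t - μ)) ^ 2 / (1 + σ ^ 2 * u ^ 2))
      (𝓝[>] 0) (𝓝 (σ ^ 2)) := by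
    have : ContinuousAt (fun u : ℝ => σ ^ 2 * (1 - u * (t - μ)) ^ 2 / (1 + σ ^ 2 * u ^ 2)) 0 :=
      (by fun_prop : ContinuousAt _ _).div (by fun_prop) (by positivity)
    simpa using this.tendsto.mono_left nhdsWithin_le_nhds
  obtain ⟨u, hu⟩ := hev.exists
  refine le_antisymm (csSup_le ⟨_, hu⟩ fun y hy => ?_)
    (le_of_tendsto hlim (hev.mono fun _ h => le_csSup bddAbove h))
  simpa [max_eq_right (sub_nonpos.2 hμt)] using le_of_mem hy

end excessSqValues

theorem stmt_6_general (μ σ t lam : ℝ) (hlam : 0 < lam)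
    (hlam' : max (t - μ) 0 ≤ lam) :
    sSup {y : ℝ | ∃ P : Measure ℝ, IsProbabilityMeasure P ∧ Integrable (fun x => x ^ 2) P ∧
        (∫ x, x ∂P) = μ ∧ (∫ x, x ^ 2 ∂P) = μ ^ 2 + σ ^ 2 ∧
        (∫ x, max (t - x) 0 ∂P) ≤ lam ∧
        y = ∫ x, (max (x - t) 0) ^ 2 ∂P}
      = if max (t - μ) 0 < lam then σ ^ 2 + (max (μ - t) 0) ^ 2 else 0 := by
  change sSup (excessSqValues μ σ t lam) = _
  split_ifs with h
  · rcases lt_or_ge t μ with ht | ht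
    · rw [max_eq_left (sub_pos.2 ht).le]
      exact (excessSqValues.isGreatest_of_lt ht hlam.le).csSup_eq
    · rw [max_eq_right (sub_nonpos.2 ht), zero_pow two_ne_zero, add_zero]
      exact excessSqValues.sSup_eq_of_le ht (lt_of_le_of_lt (le_max_left _ _) h)
  · have hgap : t - μ = lam := by
      have := le_antisymm hlam' (not_lt.1 h)
      grind
    exact (excessSqValues.isGreatest_zero hlam hgap).csSup_eq

theorem stmt_6 (μ σ t lam : ℝ) (hσ : 0 < σ) (hlam : 0 < lam)
    (hlam' : max (t - μ) 0 ≤ lam) :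
    sSup {y : ℝ | ∃ P : Measure ℝ, IsProbabilityMeasure P ∧ Integrable (fun x => x ^ 2) P ∧
        (∫ x, x ∂P) = μ ∧ (∫ x, x ^ 2 ∂P) = μ ^ 2 + σ ^ 2 ∧
        (∫ x, max (t - x) 0 ∂P) ≤ lam ∧
        y = ∫ x, (max (x - t) 0) ^ 2 ∂P}
      = if max (t - μ) 0 < lam then σ ^ 2 + (max (μ - t) 0) ^ 2 else 0 :=
  stmt_6_general μ σ t lam hlam hlam'
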